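/- arXiv:2401.13216 — 6 statements merged into one kernel-verified Lean document; each statement's English description precedes it below -/
import Mathlib

section
/- Let F : ℝ^d → ℝ be twice continuously differentiable with Q-Lipschitz Hessian (i.e., ‖∇²F(x) − ∇²F(y)‖₂ ≤ Q‖x − y‖₂ for all x, y). Then for any points x₁, …, x_M ∈ ℝ^d with average x̄ = (1/M) Σₘ xₘ, one has ‖∇F(x̄) − (1/M) Σₘ ∇F(xₘ)‖₂² ≤ (Q²/(4M)) Σₘ ‖xₘ − x̄‖₂⁴. -/
/-!
A second-order Taylor expansion around the average `x̄` gives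
`∇F(xₘ) = ∇F(x̄) + ∇²F(x̄)(xₘ - x̄) + rₘ` with `‖rₘ‖ ≤ (Q/2)‖xₘ - x̄‖²`, since the Hessian is
`Q`-Lipschitz. Averaging over `m`, the linear terms cancel because `Σₘ (xₘ - x̄) = 0`, so
`‖∇F(x̄) - (1/M) Σₘ ∇F(xₘ)‖ ≤ (Q/(2M)) Σₘ ‖xₘ - x̄‖²`; squaring and applying Cauchy–Schwarz
to the last sum gives the claim.
-/

open Finset

theorem norm_image_one_le_of_norm_deriv_le_mul {G : Type*} [NormedAddCommGroup G]
    [NormedSpace ℝ G] {f f' : ℝ → G} (hf : ∀ t, HasDerivAt f (f' t) t) (h0 : f 0 = 0) {C : ℝ}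
    (hC : ∀ t ∈ Set.Ico (0 : ℝ) 1, ‖f' t‖ ≤ C * t) : ‖f 1‖ ≤ C / 2 := by
  have hB : ∀ t : ℝ, HasDerivAt (fun t => C / 2 * t ^ 2) (C * t) t := fun t =>
    ((hasDerivAt_pow 2 t).const_mul (C / 2)).congr_deriv (by push_cast; ring)
  simpa using image_norm_le_of_norm_deriv_right_le_deriv_boundary
    (fun t _ => (hf t).continuousAt.continuousWithinAt) (fun t _ => (hf t).hasDerivWithinAt)
    (by simp [h0]) hB hC (Set.right_mem_Icc.2 zero_le_one)

theorem norm_sub_sub_fderiv_le_of_lipschitz_fderiv {E G : Type*} [NormedAddCommGroup E]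
    [NormedSpace ℝ E] [NormedAddCommGroup G] [NormedSpace ℝ G] {g : E → G}
    (hg : Differentiable ℝ g) {Q : ℝ}
    (hQ : ∀ a b, ‖fderiv ℝ g a - fderiv ℝ g b‖ ≤ Q * ‖a - b‖) (x y : E) :
    ‖g y - g x - fderiv ℝ g x (y - x)‖ ≤ Q / 2 * ‖y - x‖ ^ 2 := by
  set v := y - x
  have hderiv : ∀ t : ℝ, HasDerivAt (fun t : ℝ => g (x + t • v) - g x - t • fderiv ℝ g x v)
      (fderiv ℝ g (x + t • v) v - fderiv ℝ g x v) t := fun t => by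
    have hline : HasDerivAt (fun t : ℝ => x + t • v) v t := by
      simpa using ((hasDerivAt_id t).smul_const v).const_add x
    have := (((hg _).hasFDerivAt.comp_hasDerivAt t hline).sub_const (g x)).sub
      ((hasDerivAt_id' t).smul_const (fderiv ℝ g x v))
    rwa [one_smul] at this
  have hbound : ∀ t ∈ Set.Ico (0 : ℝ) 1,
      ‖fderiv ℝ g (x + t • v) v - fderiv ℝ g x v‖ ≤ Q * ‖v‖ ^ 2 * t := by
    intro t ht
    calc ‖fderiv ℝ g (x + t • v) v - fderiv ℝ g x v‖
        = ‖(fderiv ℝ g (x + t • v) - fderiv ℝ g x) v‖ := rfl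
      _ ≤ ‖fderiv ℝ g (x + t • v) - fderiv ℝ g x‖ * ‖v‖ := ContinuousLinearMap.le_opNorm _ _
      _ ≤ Q * ‖t • v‖ * ‖v‖ := by gcongr; simpa using hQ (x + t • v) x
      _ = Q * ‖v‖ ^ 2 * t := by rw [norm_smul, Real.norm_of_nonneg ht.1]; ring
  simpa [v, mul_div_right_comm] using
    norm_image_one_le_of_norm_deriv_le_mul hderiv (by simp) hbound

theorem sum_sub_inv_card_smul_sum {ι 𝕜 E : Type*} [Fintype ι] [Nonempty ι] [Field 𝕜]
    [CharZero 𝕜] [AddCommGroup E] [Module 𝕜 E] (x : ι → E) :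
    ∑ i, (x i - (Fintype.card ι : 𝕜)⁻¹ • ∑ j, x j) = 0 := by
  rw [sum_sub_distrib, sum_const, card_univ, ← Nat.cast_smul_eq_nsmul 𝕜, smul_smul,
    mul_inv_cancel₀ (Nat.cast_ne_zero.2 Fintype.card_ne_zero), one_smul, sub_self]

theorem norm_apply_average_sub_average_apply_le {ι E G : Type*} [Fintype ι] [Nonempty ι]
    [NormedAddCommGroup E] [NormedSpace ℝ E] [NormedAddCommGroup G] [NormedSpace ℝ G]
    {g : E → G} (hg : Differentiable ℝ g) {Q : ℝ}
    (hQ : ∀ a b, ‖fderiv ℝ g a - fderiv ℝ g b‖ ≤ Q * ‖a - b‖) (x : ι → E) :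
    ‖g ((Fintype.card ι : ℝ)⁻¹ • ∑ i, x i) - (Fintype.card ι : ℝ)⁻¹ • ∑ i, g (x i)‖ ≤
      Q / (2 * Fintype.card ι) * ∑ i, ‖x i - (Fintype.card ι : ℝ)⁻¹ • ∑ j, x j‖ ^ 2 := by
  set n : ℝ := (Fintype.card ι : ℝ)
  set xb := n⁻¹ • ∑ i, x i
  have hn : n ≠ 0 := Nat.cast_ne_zero.2 Fintype.card_ne_zero
  have hlin : ∑ i, fderiv ℝ g xb (x i - xb) = 0 := by
    rw [← map_sum, sum_sub_inv_card_smul_sum, map_zero]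
  have hid : g xb - n⁻¹ • ∑ i, g (x i) =
      -(n⁻¹ • ∑ i, (g (x i) - g xb - fderiv ℝ g xb (x i - xb))) := by
    rw [sum_sub_distrib, sum_sub_distrib, hlin, sum_const, card_univ, ← Nat.cast_smul_eq_nsmul ℝ,
      sub_zero, smul_sub, smul_smul, inv_mul_cancel₀ hn, one_smul, neg_sub]
  calc ‖g xb - n⁻¹ • ∑ i, g (x i)‖
      = n⁻¹ * ‖∑ i, (g (x i) - g xb - fderiv ℝ g xb (x i - xb))‖ := by
        rw [hid, norm_neg, norm_smul, norm_inv, Real.norm_natCast]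
    _ ≤ n⁻¹ * ∑ i, Q / 2 * ‖x i - xb‖ ^ 2 := by
        gcongr
        exact (norm_sum_le _ _).trans
          (sum_le_sum fun i _ => norm_sub_sub_fderiv_le_of_lipschitz_fderiv hg hQ xb (x i))
    _ = Q / (2 * n) * ∑ i, ‖x i - xb‖ ^ 2 := by
        rw [← mul_sum]
        field_simp

/-- If `F` is twice continuously differentiable with `Q`-Lipschitz Hessian, then for any
points `x 0, …, x (M-1)` with average `x̄`, the squared norm of the difference between the
gradient at the average and the average of the gradients is bounded by
`Q²/(4M) · Σₘ ‖xₘ − x̄‖⁴`. -/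
theorem stmt_0 {d M : ℕ} (hM : 0 < M) (Q : ℝ)
    (F : EuclideanSpace ℝ (Fin d) → ℝ)
    (hF : ContDiff ℝ 2 F)
    (hQ : ∀ x y : EuclideanSpace ℝ (Fin d),
      ‖fderiv ℝ (fderiv ℝ F) x - fderiv ℝ (fderiv ℝ F) y‖ ≤ Q * ‖x - y‖)
    (x : Fin M → EuclideanSpace ℝ (Fin d)) :
    ‖gradient F ((M : ℝ)⁻¹ • ∑ m, x m) - (M : ℝ)⁻¹ • ∑ m, gradient F (x m)‖ ^ 2 ≤
      Q ^ 2 / (4 * M) * ∑ m, ‖x m - (M : ℝ)⁻¹ • ∑ i, x i‖ ^ 4 := by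
  have : Nonempty (Fin M) := ⟨⟨0, hM⟩⟩
  set xb := (M : ℝ)⁻¹ • ∑ m, x m
  have hgrad : ‖gradient F xb - (M : ℝ)⁻¹ • ∑ m, gradient F (x m)‖ =
      ‖fderiv ℝ F xb - (M : ℝ)⁻¹ • ∑ m, fderiv ℝ F (x m)‖ := by
    simp only [gradient, ← map_sum, ← map_smul, ← map_sub, LinearIsometryEquiv.norm_map]
  have hmean : ‖fderiv ℝ F xb - (M : ℝ)⁻¹ • ∑ m, fderiv ℝ F (x m)‖ ≤
      Q / (2 * M) * ∑ m, ‖x m - xb‖ ^ 2 := by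
    simpa using norm_apply_average_sub_average_apply_le
      ((hF.fderiv_right (m := 1) le_rfl).differentiable one_ne_zero) hQ x
  have hcs : (∑ m, ‖x m - xb‖ ^ 2) ^ 2 ≤ M * ∑ m, ‖x m - xb‖ ^ 4 := by
    have := sq_sum_le_card_mul_sum_sq (s := univ) (f := fun m => ‖x m - xb‖ ^ 2)
    simp only [card_univ, Fintype.card_fin, ← pow_mul] at this
    exact this
  rw [hgrad]
  calc _ ≤ (Q / (2 * M) * ∑ m, ‖x m - xb‖ ^ 2) ^ 2 := pow_le_pow_left₀ (norm_nonneg _) hmean 2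
    _ = Q ^ 2 / (4 * M ^ 2) * (∑ m, ‖x m - xb‖ ^ 2) ^ 2 := by ring
    _ ≤ Q ^ 2 / (4 * M ^ 2) * (M * ∑ m, ‖x m - xb‖ ^ 4) := by gcongr
    _ = Q ^ 2 / (4 * M) * ∑ m, ‖x m - xb‖ ^ 4 := by field_simp
end

section
/- Let μ > 0, K ≥ 2, R ≥ 1 be given with K, R positive integers, and let η satisfy 0 ≤ η ≤ 1/(μKR). Then (1 − ημ)^{2KR} ≥ 1/16, and consequently for F(x) = (μ/2)x² and gradient descent iterates x_{t+1} = x_t − ηF'(x_t) = (1 − ημ)x_t starting from x₀, the final iterate after KR steps satisfies F(x_{KR}) ≥ (1/32)·μ·x₀². -/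
open Real

/-- On `[0, 1/2]` the concave `1 - y` lies above the convex `4⁻ʸ`, as both agree at the endpoints. -/
lemma exp_neg_two_mul_log_two_mul_le_one_sub {y : ℝ} (hy0 : 0 ≤ y) (hy : y ≤ 1 / 2) :
    exp (-(2 * log 2) * y) ≤ 1 - y := by
  have hconv := convexOn_exp.2 (Set.mem_univ 0) (Set.mem_univ (-log 2))
    (by linarith : 0 ≤ 1 - 2 * y) (by linarith : 0 ≤ 2 * y) (by ring)
  simp only [exp_zero, exp_neg, exp_log two_pos, smul_eq_mul] at hconv
  calc exp (-(2 * log 2) * y) = exp ((1 - 2 * y) * 0 + 2 * y * -log 2) := by ring_nf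
    _ ≤ (1 - 2 * y) * 1 + 2 * y * 2⁻¹ := hconv
    _ = 1 - y := by ring

lemma one_div_sixteen_le_one_sub_pow_two_mul {y : ℝ} {n : ℕ} (hy0 : 0 ≤ y) (hy : y ≤ 1 / 2)
    (hny : n * y ≤ 1) : 1 / 16 ≤ (1 - y) ^ (2 * n) := calc
  (1 / 16 : ℝ) = exp (-(2 * log 2) * 2) := by
      rw [show -(2 * log 2) * 2 = -log (2 ^ 4) by rw [log_pow]; ring, exp_neg, exp_log (by norm_num)]
      norm_num
  _ ≤ exp (-(2 * log 2) * y) ^ (2 * n) := by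
      rw [← exp_nat_mul, exp_le_exp]
      have := log_pos one_lt_two
      push_cast
      nlinarith
  _ ≤ (1 - y) ^ (2 * n) := by
      gcongr
      exact exp_neg_two_mul_log_two_mul_le_one_sub hy0 hy

lemma eq_pow_mul_of_forall_succ_eq_mul {M : Type*} [Monoid M] {a : M} {x : ℕ → M}
    (hx : ∀ t, x (t + 1) = a * x t) (t : ℕ) : x t = a ^ t * x 0 := by
  induction t with
  | zero => rw [pow_zero, one_mul]
  | succ t ih => rw [hx, ih, pow_succ', mul_assoc]

/-- For `μ > 0`, integers `K ≥ 2`, `R ≥ 1`, and `0 ≤ η ≤ 1/(μKR)`: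
`(1 − ημ)^{2KR} ≥ 1/16`, and gradient descent `x_{t+1} = (1 − ημ)x_t` on
`F(x) = (μ/2)x²` satisfies `F(x_{KR}) ≥ (1/32)·μ·x₀²`. -/
theorem stmt_7 (μ η : ℝ) (K R : ℕ) (hμ : 0 < μ) (hK : 2 ≤ K) (hR : 1 ≤ R)
    (hη0 : 0 ≤ η) (hη : η ≤ 1 / (μ * K * R))
    (x : ℕ → ℝ) (hx : ∀ t, x (t + 1) = (1 - η * μ) * x t) :
    (1 / 16 : ℝ) ≤ (1 - η * μ) ^ (2 * K * R) ∧
    (1 / 32) * μ * x 0 ^ 2 ≤ μ / 2 * x (K * R) ^ 2 := by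
  have hKR : (2 : ℝ) ≤ (K * R : ℕ) := by exact_mod_cast hK.trans (Nat.le_mul_of_pos_right K hR)
  have hstep : (K * R : ℕ) * (η * μ) ≤ 1 := by
    rw [le_div_iff₀ (by positivity)] at hη
    push_cast
    linarith
  have hstep_half : η * μ ≤ 1 / 2 := by nlinarith
  have hcontract := one_div_sixteen_le_one_sub_pow_two_mul (by positivity) hstep_half hstep
  refine ⟨by rwa [mul_assoc], ?_⟩
  calc 1 / 32 * μ * x 0 ^ 2 = μ / 2 * (1 / 16 * x 0 ^ 2) := by ring
    _ ≤ μ / 2 * ((1 - η * μ) ^ (2 * (K * R)) * x 0 ^ 2) := by gcongr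
    _ = μ / 2 * x (K * R) ^ 2 := by
      rw [eq_pow_mul_of_forall_succ_eq_mul hx (K * R), mul_pow, ← pow_mul, mul_comm (K * R)]
end

section
/- Let L, Q > 0 and define F(x) = (3/8)L x² + (L³/(64Q²)) φ(4Q x / L) where φ(x) = ∫₀ˣ log(cosh s) ds. Then F''(x) = (3/4)L + (1/4)L tanh(4Qx/L) ∈ [L/2, L] for all x ∈ ℝ, and F'''(x) = Q sech²(4Qx/L) ∈ [0, Q] with F'''(0) = Q and F'''(x) ≥ Q/2 for all x ∈ [−L/(8Q), L/(8Q)]. -/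
/-!
By the fundamental theorem of calculus `φ' = log ∘ cosh`, so `φ'' = tanh` and `φ''' = sech²`;
the constants in `F` are chosen so that the chain-rule factors `4Q/L` turn these
into `F'' = (3/4)L + (1/4)L·tanh(4Qx/L)` and `F''' = Q·sech²(4Qx/L)`. The bounds then follow from
`|tanh| < 1`, `cosh ≥ 1`, and `sech² y ≥ exp(-y²) ≥ 1 - y²` (from `cosh y ≤ exp(y²/2)`), which is
at least `3/4` when `|y| ≤ 1/2`.
-/

/-- `φ(x) = ∫₀ˣ log(cosh s) ds`. -/
noncomputable def phi (x : ℝ) : ℝ := ∫ s in (0 : ℝ)..x, Real.log (Real.cosh s)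

/-- The lower-bound instance `F(x) = (3/8)Lx² + (L³/(64Q²))·φ(4Qx/L)`. -/
noncomputable def Finst (L Q x : ℝ) : ℝ :=
  3 / 8 * L * x ^ 2 + L ^ 3 / (64 * Q ^ 2) * phi (4 * Q * x / L)

open Real

lemma hasDerivAt_phi (x : ℝ) : HasDerivAt phi (log (cosh x)) x :=
  ((continuous_cosh.log fun s => (cosh_pos s).ne').integral_hasStrictDerivAt 0 x).hasDerivAt

lemma hasDerivAt_log_cosh (x : ℝ) : HasDerivAt (fun y => log (cosh y)) (tanh x) x := by
  simpa [tanh_eq_sinh_div_cosh] using (hasDerivAt_cosh x).log (cosh_pos x).ne'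

lemma hasDerivAt_tanh (x : ℝ) : HasDerivAt tanh (1 / cosh x ^ 2) x := by
  have h := (hasDerivAt_sinh x).div (hasDerivAt_cosh x) (cosh_pos x).ne'
  rw [show sinh / cosh = tanh from funext fun y => (tanh_eq_sinh_div_cosh y).symm] at h
  refine h.congr_deriv ?_
  rw [← sq, ← sq, ← cosh_sq_sub_sinh_sq x]

lemma hasDerivAt_comp_mul_div {f f' : ℝ → ℝ} (hf : ∀ y, HasDerivAt f (f' y) y) (c d x : ℝ) :
    HasDerivAt (fun x => f (c * x / d)) (f' (c * x / d) * (c / d)) x :=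
  (hf _).comp x <| by simpa using ((hasDerivAt_id x).const_mul c).div_const d

lemma exp_neg_sq_le_one_div_cosh_sq (x : ℝ) : exp (-x ^ 2) ≤ 1 / cosh x ^ 2 := by
  have hcosh : cosh x ^ 2 ≤ exp (x ^ 2) := by
    calc cosh x ^ 2 ≤ exp (x ^ 2 / 2) ^ 2 := by gcongr; exact cosh_le_exp_half_sq x
      _ = exp (x ^ 2) := by rw [← exp_nat_mul]; ring_nf
  rw [exp_neg, ← one_div]
  exact one_div_le_one_div_of_le (by positivity) hcosh

lemma one_sub_sq_le_one_div_cosh_sq (x : ℝ) : 1 - x ^ 2 ≤ 1 / cosh x ^ 2 := by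
  linarith [add_one_le_exp (-x ^ 2), exp_neg_sq_le_one_div_cosh_sq x]

lemma one_div_cosh_sq_le_one (x : ℝ) : 1 / cosh x ^ 2 ≤ 1 :=
  div_le_one_of_le₀ (one_le_pow₀ (one_le_cosh x)) (by positivity)

section Finst

variable {L Q : ℝ}

lemma deriv_Finst (hL : L ≠ 0) (hQ : Q ≠ 0) :
    deriv (Finst L Q) = fun x =>
      3 / 4 * L * x + L ^ 2 / (16 * Q) * log (cosh (4 * Q * x / L)) := by
  funext x
  have hquad : HasDerivAt (fun x : ℝ => 3 / 8 * L * x ^ 2) (3 / 4 * L * x) x := by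
    exact ((hasDerivAt_pow 2 x).const_mul (3 / 8 * L)).congr_deriv (by norm_num; ring)
  refine ((hquad.add ((hasDerivAt_comp_mul_div hasDerivAt_phi (4 * Q) L x).const_mul
    (L ^ 3 / (64 * Q ^ 2)))).congr_deriv ?_).deriv
  field_simp
  ring

lemma deriv_deriv_Finst (hL : L ≠ 0) (hQ : Q ≠ 0) :
    deriv (deriv (Finst L Q)) = fun x => 3 / 4 * L + 1 / 4 * L * tanh (4 * Q * x / L) := by
  funext x
  rw [deriv_Finst hL hQ]
  have hlin : HasDerivAt (fun x : ℝ => 3 / 4 * L * x) (3 / 4 * L) x := by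
    simpa using (hasDerivAt_id x).const_mul (3 / 4 * L)
  refine ((hlin.add ((hasDerivAt_comp_mul_div hasDerivAt_log_cosh (4 * Q) L x).const_mul
    (L ^ 2 / (16 * Q)))).congr_deriv ?_).deriv
  field_simp
  ring

lemma deriv_deriv_deriv_Finst (hL : L ≠ 0) (hQ : Q ≠ 0) :
    deriv (deriv (deriv (Finst L Q))) = fun x => Q * (1 / cosh (4 * Q * x / L) ^ 2) := by
  funext x
  rw [deriv_deriv_Finst hL hQ]
  refine ((((hasDerivAt_comp_mul_div hasDerivAt_tanh (4 * Q) L x).const_mul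
    (1 / 4 * L)).const_add (3 / 4 * L)).congr_deriv ?_).deriv
  field_simp

end Finst

/-- For `L, Q > 0` and `F = Finst L Q`:
`F''(x) = (3/4)L + (1/4)L·tanh(4Qx/L) ∈ [L/2, L]` for all `x`, and
`F'''(x) = Q·sech²(4Qx/L) ∈ [0, Q]` with `F'''(0) = Q` and `F'''(x) ≥ Q/2`
on `[−L/(8Q), L/(8Q)]`. -/
theorem stmt_11 (L Q : ℝ) (hL : 0 < L) (hQ : 0 < Q) :
    (∀ x, deriv (deriv (Finst L Q)) x =
      3 / 4 * L + 1 / 4 * L * Real.tanh (4 * Q * x / L)) ∧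
    (∀ x, deriv (deriv (Finst L Q)) x ∈ Set.Icc (L / 2) L) ∧
    (∀ x, deriv (deriv (deriv (Finst L Q))) x =
      Q * (1 / Real.cosh (4 * Q * x / L) ^ 2)) ∧
    (∀ x, deriv (deriv (deriv (Finst L Q))) x ∈ Set.Icc 0 Q) ∧
    deriv (deriv (deriv (Finst L Q))) 0 = Q ∧
    (∀ x ∈ Set.Icc (-(L / (8 * Q))) (L / (8 * Q)),
      Q / 2 ≤ deriv (deriv (deriv (Finst L Q))) x) := by
  rw [deriv_deriv_deriv_Finst hL.ne' hQ.ne', deriv_deriv_Finst hL.ne' hQ.ne']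
  refine ⟨fun _ => rfl, fun x => ?_, fun _ => rfl, fun x => ?_, by simp, fun x hx => ?_⟩
  · have := neg_one_lt_tanh (4 * Q * x / L)
    have := tanh_lt_one (4 * Q * x / L)
    constructor <;> nlinarith
  · have := one_div_cosh_sq_le_one (4 * Q * x / L)
    constructor <;> nlinarith [show 0 ≤ 1 / cosh (4 * Q * x / L) ^ 2 by positivity]
  · have habs : |4 * Q * x / L| ≤ 1 / 2 := by
      rw [abs_div, abs_mul, abs_of_pos hL, abs_of_pos (by positivity : 0 < 4 * Q), div_le_iff₀ hL]
      calc 4 * Q * |x| ≤ 4 * Q * (L / (8 * Q)) := by gcongr; exact abs_le.mpr hx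
        _ = 1 / 2 * L := by field_simp; ring
    have hsq : (4 * Q * x / L) ^ 2 ≤ 1 / 4 := by
      nlinarith [sq_abs (4 * Q * x / L), abs_nonneg (4 * Q * x / L)]
    have := one_sub_sq_le_one_div_cosh_sq (4 * Q * x / L)
    dsimp only
    nlinarith
end

section
/- Let h : ℝ^d → ℝ ∪ {+∞} be a Legendre function and ψ : ℝ^d → ℝ a convex function. Define the generalized Bregman divergence D̃_{h+ψ}(x, y) = (h+ψ)(x) − (h+ψ)(∇(h+ψ)*(y)) − ⟨y, x − ∇(h+ψ)*(y)⟩ for x ∈ dom h, y ∈ int dom (h+ψ)*. Then D̃_{h+ψ}(x, y) ≥ D_h(x, ∇(h+ψ)*(y)), where D_h(x, w) = h(x) − h(w) − ⟨∇h(w), x − w⟩ is the ordinary Bregman divergence. -/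
open scoped RealInnerProductSpace
open Set

/-! If `p` minimizes `f + g` with `f` differentiable at `p` and `g` convex, then `-f'(p)` is a
subgradient of `g` at `p`: along the segment from `p` to `x`, convexity bounds `g` by its chord,
so `t ↦ f (p + t • (x - p)) + t * (g x - g p)` is minimal at `t = 0` on `[0, 1]`, and its
right derivative there is nonnegative. Applied to `f = h - ⟪y, ·⟫` and `g = ψ`, the subgradient
inequality for `y - ∇h(p)` is exactly the claimed comparison of divergences. -/

variable {E : Type*} [NormedAddCommGroup E] [NormedSpace ℝ E]

def HasSubgradientAt (g : E → ℝ) (ℓ : E →L[ℝ] ℝ) (p : E) : Prop :=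
  ∀ x, g p + ℓ (x - p) ≤ g x

theorem IsMinOn.hasSubgradientAt_neg_of_hasFDerivAt {f g : E → ℝ} {f' : E →L[ℝ] ℝ} {p : E}
    (hmin : IsMinOn (f + g) univ p) (hf : HasFDerivAt f f' p) (hg : ConvexOn ℝ univ g) :
    HasSubgradientAt g (-f') p := by
  intro x
  set φ : ℝ → ℝ := fun t => f (p + t • (x - p)) + t * (g x - g p)
  have hφ : HasDerivAt φ (f' (x - p) + (g x - g p)) 0 := by
    have hline : HasDerivAt (fun t : ℝ => p + t • (x - p)) (x - p) 0 := by
      simpa using ((hasDerivAt_id (0 : ℝ)).smul_const (x - p)).const_add p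
    have hf0 : HasFDerivAt f f' (p + (0 : ℝ) • (x - p)) := by simpa using hf
    have hsum := (hf0.comp_hasDerivAt 0 hline).add ((hasDerivAt_id' 0).mul_const (g x - g p))
    rwa [one_mul] at hsum
  have hφmin : IsMinOn φ (Icc 0 1) 0 := by
    rintro t ⟨ht0, ht1⟩
    have hchord : g (p + t • (x - p)) ≤ (1 - t) * g p + t * g x := by
      rw [show p + t • (x - p) = (1 - t) • p + t • x by module]
      exact hg.2 (mem_univ p) (mem_univ x) (by linarith) ht0 (by ring)
    have hle : f p + g p ≤ f (p + t • (x - p)) + g (p + t • (x - p)) :=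
      hmin (mem_univ _)
    change φ 0 ≤ φ t
    simp only [φ, zero_smul, add_zero, zero_mul]
    nlinarith
  have hone : (1 : ℝ) ∈ posTangentConeAt (Icc 0 1) 0 :=
    mem_posTangentConeAt_of_segment_subset (by simp [segment_eq_Icc])
  have hnonneg := hφmin.localize.hasFDerivWithinAt_nonneg hφ.hasFDerivAt.hasFDerivWithinAt hone
  rw [ContinuousLinearMap.toSpanSingleton_apply, one_smul] at hnonneg
  rw [neg_apply]
  linarith

theorem stmt_14_general {d : ℕ} (h ψ : EuclideanSpace ℝ (Fin d) → ℝ)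
    (hψ : ConvexOn ℝ Set.univ ψ)
    (hdiff : Differentiable ℝ h)
    (y p : EuclideanSpace ℝ (Fin d))
    (hp : ∀ z : EuclideanSpace ℝ (Fin d),
      ⟪y, z⟫ - (h z + ψ z) ≤ ⟪y, p⟫ - (h p + ψ p))
    (x : EuclideanSpace ℝ (Fin d)) :
    h x - h p - ⟪gradient h p, x - p⟫ ≤
      (h x + ψ x) - (h p + ψ p) - ⟪y, x - p⟫ := by
  have hmin : IsMinOn ((fun z => h z - ⟪y, z⟫) + ψ) univ p := fun z _ => by
    show h p - ⟪y, p⟫ + ψ p ≤ h z - ⟪y, z⟫ + ψ z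
    linarith [hp z]
  have hderiv := (hdiff p).hasGradientAt.hasFDerivAt.sub (innerSL ℝ y).hasFDerivAt
  have hsub := hmin.hasSubgradientAt_neg_of_hasFDerivAt hderiv hψ x
  simp only [neg_apply, sub_apply,
    InnerProductSpace.toDual_apply_apply, innerSL_apply_apply] at hsub
  linarith

/-- Generalized Bregman divergence inequality: if `h` is convex and differentiable,
`ψ` is convex, and `p` is the point `∇(h+ψ)*(y)`, i.e. the maximizer of
`⟨y, ·⟩ − (h + ψ)(·)`, then
`D̃_{h+ψ}(x, y) = (h+ψ)(x) − (h+ψ)(p) − ⟨y, x − p⟩` dominates the ordinary Bregman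
divergence `D_h(x, p) = h(x) − h(p) − ⟨∇h(p), x − p⟩`. -/
theorem stmt_14 {d : ℕ} (h ψ : EuclideanSpace ℝ (Fin d) → ℝ)
    (hh : ConvexOn ℝ Set.univ h) (hψ : ConvexOn ℝ Set.univ ψ)
    (hdiff : Differentiable ℝ h)
    (y p : EuclideanSpace ℝ (Fin d))
    (hp : ∀ z : EuclideanSpace ℝ (Fin d),
      ⟪y, z⟫ - (h z + ψ z) ≤ ⟪y, p⟫ - (h p + ψ p))
    (x : EuclideanSpace ℝ (Fin d)) :
    h x - h p - ⟪gradient h p, x - p⟫ ≤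
      (h x + ψ x) - (h p + ψ p) - ⟪y, x - p⟫ :=
  stmt_14_general h ψ hψ hdiff y p hp x
end

section
/- Fix L > 0 and an even integer K ≥ 2, and real η with 0 < η ≤ 2/L. Define a = (1/2)((1 − ηL/4)^K + (1 − ηL/8)^K) and b = (2/L)(1 − (1 − ηL/4)^K) − (4/L)(1 − (1 − ηL/8)^K). Then b ≤ −(0.001/L)·min{1, (ηLK)²}. -/
set_option maxHeartbeats 1000000


lemma aux_upper (s : ℝ) (h0 : 0 ≤ s) (h1 : s ≤ 1) :
    ∀ n : ℕ, (1 - s) ^ n ≤ 1 - n * s + n * ((n : ℝ) - 1) / 2 * s ^ 2 := by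
  intro n
  induction n with
  | zero => norm_num
  | succ n ih =>
    have hs : (0:ℝ) ≤ 1 - s := by linarith
    have hp : (0:ℝ) ≤ (1 - s) ^ n := pow_nonneg hs n
    have hQ : (0:ℝ) ≤ 1 - n * s + n * ((n : ℝ) - 1) / 2 * s ^ 2 := le_trans hp ih
    have hc : (0:ℝ) ≤ (n:ℝ) * ((n:ℝ) - 1) := by
      rcases Nat.eq_zero_or_pos n with h | h
      · simp [h]
      · have : (1:ℝ) ≤ n := by exact_mod_cast h
        nlinarith
    have hcs : (0:ℝ) ≤ (n:ℝ) * ((n:ℝ) - 1) / 2 * (s * s * s) := by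
      nlinarith [mul_nonneg hc (mul_nonneg (mul_nonneg h0 h0) h0)]
    calc (1 - s) ^ (n + 1) = (1 - s) ^ n * (1 - s) := pow_succ _ _
      _ ≤ (1 - n * s + n * ((n : ℝ) - 1) / 2 * s ^ 2) * (1 - s) :=
          mul_le_mul_of_nonneg_right ih hs
      _ ≤ 1 - (n + 1 : ℕ) * s + (n + 1 : ℕ) * (((n + 1 : ℕ) : ℝ) - 1) / 2 * s ^ 2 := by
          push_cast; nlinarith [hcs]

lemma aux_lower (s : ℝ) (h0 : 0 ≤ s) :
    ∀ n : ℕ, 1 + n * s + n * ((n : ℝ) - 1) / 2 * s ^ 2 ≤ (1 + s) ^ n := by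
  intro n
  induction n with
  | zero => norm_num
  | succ n ih =>
    have hc : (0:ℝ) ≤ (n:ℝ) * ((n:ℝ) - 1) := by
      rcases Nat.eq_zero_or_pos n with h | h
      · simp [h]
      · have : (1:ℝ) ≤ n := by exact_mod_cast h
        nlinarith
    have hcs : (0:ℝ) ≤ (n:ℝ) * ((n:ℝ) - 1) / 2 * (s * s * s) := by
      nlinarith [mul_nonneg hc (mul_nonneg (mul_nonneg h0 h0) h0)]
    have hs : (0:ℝ) ≤ 1 + s := by linarith
    calc 1 + ((n + 1 : ℕ) : ℝ) * s + (n + 1 : ℕ) * (((n + 1 : ℕ) : ℝ) - 1) / 2 * s ^ 2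
        ≤ (1 + n * s + n * ((n : ℝ) - 1) / 2 * s ^ 2) * (1 + s) := by push_cast; nlinarith [hcs]
      _ ≤ (1 + s) ^ n * (1 + s) := mul_le_mul_of_nonneg_right ih hs
      _ = (1 + s) ^ (n + 1) := (pow_succ _ _).symm

lemma aux_powdiff (a b : ℝ) (hb : 0 ≤ b) (hba : b ≤ a) :
    ∀ n : ℕ, a ^ (n + 1) - b ^ (n + 1) ≤ (n + 1) * a ^ n * (a - b) := by
  intro n
  induction n with
  | zero => norm_num
  | succ n ih =>
    have ha : 0 ≤ a := le_trans hb hba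
    have hbn : b ^ (n + 1) ≤ a ^ (n + 1) := pow_le_pow_left₀ hb hba _
    have h2 := mul_le_mul_of_nonneg_left ih ha
    have h3 := mul_le_mul_of_nonneg_right hbn (sub_nonneg.2 hba)
    push_cast
    calc a ^ (n + 1 + 1) - b ^ (n + 1 + 1)
        = a * (a ^ (n + 1) - b ^ (n + 1)) + b ^ (n + 1) * (a - b) := by ring
      _ ≤ a * ((n + 1) * a ^ n * (a - b)) + a ^ (n + 1) * (a - b) := by linarith
      _ = ((n : ℝ) + 1 + 1) * a ^ (n + 1) * (a - b) := by ring


lemma aux_case2_q (c x : ℝ) (hc : 3 ≤ c) (hx : 0 ≤ x) :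
    1 + ((c+1)*x/8) + 3*((c+1)*x/8)^2/8 ≤ 1 + (c+1)*(x/8) + (c+1)*((c+1)-1)/2*(x/8)^2 := by
  nlinarith [mul_nonneg (mul_nonneg (by linarith : (0:ℝ) ≤ c - 3) (by linarith : (0:ℝ) ≤ c + 1))
    (mul_nonneg hx hx)]

lemma aux_min1 (y : ℝ) (hy : 1/2 < y) : (1:ℝ) ≤ 64 * y^2 := by nlinarith

lemma aux_case2_main (x y t : ℝ) (hx0 : 0 < x) (hx2 : x ≤ 2) (hy : 1/2 < y)
    (ht0 : 0 ≤ t) (ht1 : t ≤ 1) (htq : t * (1 + y + 3*y^2/8) ≤ 1) :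
    -2*(1-t)^2 + x*y*t/4 ≤ -0.001 := by
  have hy0 : (0:ℝ) < y := by linarith
  have hq0 : (0:ℝ) < 1 + y + 3*y^2/8 := by positivity
  obtain ⟨T, hTdef⟩ : ∃ T : ℝ, T = 1 / (1 + y + 3*y^2/8) := ⟨_, rfl⟩
  have hTq : T * (1 + y + 3*y^2/8) = 1 := by rw [hTdef]; field_simp
  have hT : t ≤ T := by rw [hTdef, le_div_iff₀ hq0]; exact htq
  have hq1 : (1:ℝ) ≤ 1 + y + 3*y^2/8 := by nlinarith [sq_nonneg y]
  have hT0 : 0 ≤ T := le_trans ht0 hT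
  have hT1 : T ≤ 1 := by nlinarith [hTq, hq1, hT0]
  have hmono : -2*(1-t)^2 + x*y*t/4 ≤ -2*(1-T)^2 + y*T/2 := by
    have h1 : x*y*t/4 ≤ y*t/2 := by
      nlinarith [mul_nonneg (mul_nonneg hy0.le ht0) (by linarith : (0:ℝ) ≤ 2 - x)]
    have h2 : -2*(1-t)^2 + y*t/2 ≤ -2*(1-T)^2 + y*T/2 := by
      nlinarith [mul_nonneg (sub_nonneg.2 hT)
        (show (0:ℝ) ≤ 2*(2 - T - t) + y/2 by linarith)]
    linarith
  have key : 0.001 * (1 + y + 3*y^2/8)^2 ≤ 2*((1 + y + 3*y^2/8)-1)^2 - y*(1 + y + 3*y^2/8)/2 := by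
    have h12 : (0:ℝ) ≤ y - 1/2 := by linarith
    nlinarith [mul_nonneg h12 h12, h12, mul_nonneg (mul_nonneg h12 h12) h12,
      mul_nonneg (mul_nonneg (mul_nonneg h12 h12) h12) h12, sq_nonneg y,
      mul_nonneg (by linarith : (0:ℝ) ≤ y) h12]
  have hfinal : -2*(1-T)^2 + y*T/2 ≤ -0.001 := by
    have h3 := mul_le_mul_of_nonneg_left key (sq_nonneg T)
    have h1sq : (1-T)^2 = T^2*(y + 3*y^2/8)^2 := by
      have h1 : 1 - T = T*(y + 3*y^2/8) := by linear_combination -hTq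
      rw [h1]; ring
    have h4y : y*T/2 = T^2*(y + y^2 + 3*y^3/8)/2 := by
      linear_combination (-(y*T/2)) * hTq
    have h2' : (1:ℝ) = T^2*(1 + y + 3*y^2/8)^2 := by
      linear_combination (-(T*(1 + y + 3*y^2/8)+1)) * hTq
    nlinarith [h3, h1sq, h4y, h2']
  linarith


/-- For `L > 0`, even `K ≥ 2`, `0 < η ≤ 2/L`, the heterogeneity drift coefficient
`b = (2/L)(1 − (1 − ηL/4)^K) − (4/L)(1 − (1 − ηL/8)^K)` satisfies
`b ≤ −(0.001/L)·min{1, (ηLK)²}`. -/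
theorem stmt_16 (L η : ℝ) (K : ℕ) (hL : 0 < L) (hK : 2 ≤ K) (hKeven : Even K)
    (hη : 0 < η) (hη2 : η ≤ 2 / L) :
    2 / L * (1 - (1 - η * L / 4) ^ K) - 4 / L * (1 - (1 - η * L / 8) ^ K) ≤
      -(0.001 / L) * min 1 ((η * L * K) ^ 2) := by
  set x := η * L with hxdef
  have hx0 : 0 < x := mul_pos hη hL
  have hx2 : x ≤ 2 := by
    rw [hxdef]
    calc η * L ≤ (2 / L) * L := mul_le_mul_of_nonneg_right hη2 hL.le
      _ = 2 := by field_simp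
  set t := (1 - x / 8) ^ K with htdef
  set y := (K:ℝ) * x / 8 with hydef
  have hv0 : (0:ℝ) ≤ 1 - x / 8 := by linarith
  have hv1 : (1:ℝ) - x / 8 ≤ 1 := by linarith
  have hu0 : (0:ℝ) ≤ 1 - x / 4 := by linarith
  have ht0 : 0 ≤ t := pow_nonneg hv0 K
  have ht1 : t ≤ 1 := pow_le_one₀ hv0 hv1
  have hy0 : 0 < y := by rw [hydef]; positivity
  obtain ⟨k, rfl⟩ : ∃ k, K = k + 1 := ⟨K - 1, by omega⟩
  clear_value x t y
  have hk1 : 1 ≤ k := by omega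
  have hkpos : (1:ℝ) ≤ (k:ℝ) := by exact_mod_cast hk1
  have hyx : y = ((k:ℝ) + 1) * x / 8 := by rw [hydef]; push_cast; ring
  -- master bound : g ≤ -2(1-t)^2 + x*y*t/4
  have huv : 1 - x / 4 ≤ (1 - x / 8) ^ 2 := by nlinarith
  have hD := aux_powdiff ((1 - x/8)^2) (1 - x/4) hu0 huv k
  have hvv : ((1 - x/8)^2) ^ (k+1) = t ^ 2 := by rw [htdef, ← pow_mul, ← pow_mul, Nat.mul_comm]
  have hpowle : ((1 - x/8)^2) ^ k ≤ t := by
    rw [htdef, ← pow_mul]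
    exact pow_le_pow_of_le_one hv0 hv1 (by omega)
  have hab : (1 - x/8)^2 - (1 - x/4) = x^2/64 := by ring
  have hmaster : 4 * t - 2 * (1 - x/4)^(k+1) - 2 ≤ -2 * (1 - t)^2 + x * y * t / 4 := by
    have h1 : t^2 - (1 - x/4)^(k+1) ≤ ((k:ℝ)+1) * t * (x^2/64) := by
      rw [← hvv]
      calc ((1 - x/8)^2) ^ (k+1) - (1 - x/4)^(k+1)
          ≤ ((k:ℝ)+1) * ((1 - x/8)^2) ^ k * ((1 - x/8)^2 - (1 - x/4)) := hD
        _ ≤ ((k:ℝ)+1) * t * (x^2/64) := by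
            rw [hab]
            have h2 : ((k:ℝ)+1) * ((1 - x/8)^2) ^ k ≤ ((k:ℝ)+1) * t :=
              mul_le_mul_of_nonneg_left hpowle (by positivity)
            exact mul_le_mul_of_nonneg_right h2 (by positivity)
    have hxy : x * y * t / 4 = 2 * (((k:ℝ)+1) * t * (x^2/64)) := by rw [hyx]; ring
    nlinarith [h1, hxy]
  -- reduce to the key inequality (clear denominators by L)
  suffices hg : 4 * t - 2 * (1 - x/4)^(k+1) - 2 ≤ -0.001 * min 1 ((x * ((k:ℝ)+1)) ^ 2) by
    have hcast : ((k+1 : ℕ) : ℝ) = (k:ℝ) + 1 := by push_cast; ring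
    rw [hcast]
    have e1 : 2 / L * (1 - (1 - x/4)^(k+1)) - 4 / L * (1 - t)
        = (4 * t - 2 * (1 - x/4)^(k+1) - 2) / L := by ring
    have e2 : -(0.001 / L) * min 1 ((x * ((k:ℝ)+1)) ^ 2)
        = (-0.001 * min 1 ((x * ((k:ℝ)+1)) ^ 2)) / L := by ring
    rw [e1, e2]
    exact div_le_div_of_nonneg_right hg hL.le
  have e64 : (x * ((k:ℝ)+1))^2 = 64 * y^2 := by rw [hyx]; ring
  by_cases hy : y ≤ 1/2
  · -- small y case
    have hA := aux_upper (x/8) (by linarith) (by linarith) (k+1)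
    rw [← htdef] at hA
    push_cast at hA
    have h5 : ((k:ℝ)+1) * (k:ℝ) * x^2 ≤ ((k:ℝ)+1) * ((k:ℝ)+1) * x^2 := by nlinarith [sq_nonneg x]
    have hDlow : y - y^2/2 ≤ 1 - t := by rw [hyx]; nlinarith [hA, h5]
    have h34 : 3*y/4 ≤ 1 - t := by
      nlinarith [mul_nonneg hy0.le (by linarith : (0:ℝ) ≤ 1/2 - y), hDlow]
    have hxy4 : x ≤ 4*y := by
      rw [hyx]; nlinarith [mul_nonneg hx0.le (by linarith : (0:ℝ) ≤ (k:ℝ) - 1)]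
    have hminle : -0.001 * (64*y^2) ≤ -0.001 * min 1 ((x*((k:ℝ)+1))^2) := by
      rw [← e64]
      linarith [min_le_right (1:ℝ) ((x*((k:ℝ)+1))^2)]
    have hsq : 2*(3*y/4)^2 ≤ 2*(1-t)^2 := by
      have := pow_le_pow_left₀ (show (0:ℝ) ≤ 3*y/4 by positivity) h34 2
      linarith
    have hxt : x * y * t / 4 ≤ y^2 := by
      have h1 : x * t ≤ 4*y := by
        have h2 := mul_le_mul hxy4 ht1 ht0 (by positivity : (0:ℝ) ≤ 4*y)
        linarith
      have h3 := mul_le_mul_of_nonneg_right h1 (show (0:ℝ) ≤ y/4 by positivity)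
      linarith
    linarith [hmaster, hsq, hxt, hminle, sq_nonneg y]
  · -- large y case
    push_neg at hy
    have hK4 : 3 ≤ k := by
      have hk2 : k ≠ 1 := by
        rintro rfl
        rw [hyx] at hy
        push_cast at hy
        linarith
      have hk3 : k ≠ 2 := by
        rintro rfl
        exact (by decide : ¬ Even 3) hKeven
      omega
    have hk3 : (3:ℝ) ≤ (k:ℝ) := by exact_mod_cast hK4
    have hmin1 : min 1 ((x*((k:ℝ)+1))^2) = 1 := by
      apply min_eq_left
      rw [e64]
      exact aux_min1 y hy
    rw [hmin1]
    have hB := aux_lower (x/8) (by linarith) (k+1)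
    push_cast at hB
    have hq38 : 1 + y + 3*y^2/8 ≤ (1 + x/8)^(k+1) := by
      rw [hyx]
      exact le_trans (aux_case2_q (k:ℝ) x hk3 hx0.le) hB
    have htprod : t * (1 + x/8)^(k+1) ≤ 1 := by
      rw [htdef, ← mul_pow]
      have h1 : (1 - x/8) * (1 + x/8) = 1 - (x/8)^2 := by ring
      rw [h1]
      exact pow_le_one₀ (by nlinarith) (by nlinarith [sq_nonneg x])
    have htq : t * (1 + y + 3*y^2/8) ≤ 1 :=
      le_trans (mul_le_mul_of_nonneg_left hq38 ht0) htprod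
    have hend := aux_case2_main x y t hx0 hx2 hy ht0 ht1 htq
    linarith [hmaster, hend]
end

section
/- Let μ, L > 0 with μ ≤ L, let γ = η ∈ (0, 1/L], and let H be any symmetric matrix with μI ⪯ H ⪯ LI. Define the 2d×2d block matrix A = (1/(1+ημ))·[[I − ηH, ημ(I − ηH)], [−η(H − μI), I − η²μH]] and the transformation X = [[(η/γ)I, 0],[I, I]] = [[I, 0],[I, I]] (since γ = η). Then ‖X⁻¹ A X‖₂ ≤ 1. -/
open Matrix

/-- The ℓ²-operator (spectral) norm of a square real matrix. -/
noncomputable def opNorm {n : Type*} [Fintype n] [DecidableEq n]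
    (A : Matrix n n ℝ) : ℝ :=
  ‖Matrix.toEuclideanCLM (𝕜 := ℝ) A‖

/-- The matrix `A(μ, γ, η, H)` of the FedAc stability recursion with `γ = η`. -/
noncomputable def Amat {d : ℕ} (μ η : ℝ) (H : Matrix (Fin d) (Fin d) ℝ) :
    Matrix (Fin d ⊕ Fin d) (Fin d ⊕ Fin d) ℝ :=
  (1 / (1 + η * μ)) •
    Matrix.fromBlocks (1 - η • H) ((η * μ) • (1 - η • H))
      (-(η • (H - μ • (1 : Matrix (Fin d) (Fin d) ℝ)))) (1 - (η ^ 2 * μ) • H)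

/-- The transformation `X = [[I, 0], [I, I]]` (the case `γ = η` of `X(γ,η)`). -/
noncomputable def Xmat (d : ℕ) : Matrix (Fin d ⊕ Fin d) (Fin d ⊕ Fin d) ℝ :=
  Matrix.fromBlocks (1 : Matrix (Fin d) (Fin d) ℝ) (0 : Matrix (Fin d) (Fin d) ℝ)
    (1 : Matrix (Fin d) (Fin d) ℝ) (1 : Matrix (Fin d) (Fin d) ℝ)

/-!
Conjugating by `X` makes the recursion matrix block upper triangular,
`X⁻¹AX = (1 + ημ)⁻¹ • [[(1 + ημ) B, ημ B], [0, (1 - ημ) I]]` with `B = I - ηH`.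
Since `0 ⪯ B ⪯ (1 - ημ) I`, the functional calculus gives `‖B‖ ≤ 1 - ημ`, and the block bound
`‖[[A₁₁, A₁₂], [A₂₁, A₂₂]]‖ ≤ max ‖A₁₁‖ ‖A₂₂‖ + max ‖A₁₂‖ ‖A₂₁‖` yields
`‖X⁻¹AX‖ ≤ (1 - ημ)(1 + 2ημ) / (1 + ημ) = 1 - 2η²μ² / (1 + ημ) ≤ 1`.
-/

open WithLp
open scoped Matrix.Norms.L2Operator MatrixOrder

theorem norm_le_of_nonneg_of_le_algebraMap {A : Type*} [NormedRing A] [StarRing A]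
    [NormedAlgebra ℝ A] [PartialOrder A] [StarOrderedRing A]
    [IsometricContinuousFunctionalCalculus ℝ A IsSelfAdjoint] [NonnegSpectrumClass ℝ A]
    {a : A} {t : ℝ} (ht : 0 ≤ t) (h₀ : 0 ≤ a) (h : a ≤ algebraMap ℝ A t) : ‖a‖ ≤ t := by
  rw [← cfc_id' ℝ a]
  refine norm_cfc_le ht fun x hx => abs_le.mpr ⟨?_, ?_⟩
  · linarith [spectrum_nonneg_of_nonneg h₀ hx]
  · exact (le_algebraMap_iff_spectrum_le (a := a)).mp h x hx

namespace EuclideanSpace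

variable {𝕜 : Type*} [RCLike 𝕜] {m n : Type*} [Fintype m] [Fintype n]

theorem norm_toLp_sumElim_sq (p : m → 𝕜) (q : n → 𝕜) :
    ‖toLp 2 (Sum.elim p q)‖ ^ 2 = ‖toLp 2 p‖ ^ 2 + ‖toLp 2 q‖ ^ 2 := by
  simp [EuclideanSpace.norm_sq_eq, Fintype.sum_sum_type]

theorem norm_eq_sqrt_inl_inr (x : EuclideanSpace 𝕜 (m ⊕ n)) :
    ‖x‖ = √(‖toLp 2 (ofLp x ∘ .inl)‖ ^ 2 + ‖toLp 2 (ofLp x ∘ .inr)‖ ^ 2) := by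
  rw [← norm_toLp_sumElim_sq, Sum.elim_comp_inl_inr, toLp_ofLp, Real.sqrt_sq (norm_nonneg _)]

theorem norm_toLp_sumElim_le {p : m → 𝕜} {q : n → 𝕜} {c u v : ℝ} (hc : 0 ≤ c)
    (hp : ‖toLp 2 p‖ ≤ c * u) (hq : ‖toLp 2 q‖ ≤ c * v) :
    ‖toLp 2 (Sum.elim p q)‖ ≤ c * √(u ^ 2 + v ^ 2) := by
  rw [← Real.sqrt_sq (norm_nonneg _), norm_toLp_sumElim_sq, ← Real.sqrt_sq hc,
    ← Real.sqrt_mul (sq_nonneg c)]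
  refine Real.sqrt_le_sqrt ?_
  nlinarith [pow_le_pow_left₀ (norm_nonneg _) hp 2, pow_le_pow_left₀ (norm_nonneg _) hq 2]

end EuclideanSpace

namespace Matrix

variable {𝕜 : Type*} [RCLike 𝕜] {m₁ m₂ n₁ n₂ : Type*} [Fintype m₁] [Fintype m₂] [Fintype n₁]
  [Fintype n₂] [DecidableEq n₁] [DecidableEq n₂]

theorem l2_opNorm_le_of_mulVec {m n : Type*} [Fintype m] [Fintype n] [DecidableEq n]
    (M : Matrix m n 𝕜) {K : ℝ} (hK : 0 ≤ K)
    (h : ∀ x : EuclideanSpace 𝕜 n, ‖toLp 2 (M *ᵥ ofLp x)‖ ≤ K * ‖x‖) : ‖M‖ ≤ K := by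
  rw [l2_opNorm_def]
  exact ContinuousLinearMap.opNorm_le_bound _ hK h

theorem l2_opNorm_mulVec_le_of_le {m n : Type*} [Fintype m] [Fintype n] [DecidableEq n]
    (M : Matrix m n 𝕜) {c : ℝ} (hc : ‖M‖ ≤ c) (v : n → 𝕜) :
    ‖toLp 2 (M *ᵥ v)‖ ≤ c * ‖toLp 2 v‖ :=
  (M.l2_opNorm_mulVec (toLp 2 v)).trans (mul_le_mul_of_nonneg_right hc (norm_nonneg _))

theorem l2_opNorm_fromBlocks_diag_le (A : Matrix m₁ n₁ 𝕜) (D : Matrix m₂ n₂ 𝕜) :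
    ‖fromBlocks A 0 0 D‖ ≤ max ‖A‖ ‖D‖ := by
  refine l2_opNorm_le_of_mulVec _ (le_max_of_le_left (norm_nonneg _)) fun x => ?_
  rw [EuclideanSpace.norm_eq_sqrt_inl_inr x, fromBlocks_mulVec, zero_mulVec, zero_mulVec,
    add_zero, zero_add]
  exact EuclideanSpace.norm_toLp_sumElim_le (le_max_of_le_left (norm_nonneg _))
    (A.l2_opNorm_mulVec_le_of_le (le_max_left _ _) _)
    (D.l2_opNorm_mulVec_le_of_le (le_max_right _ _) _)

theorem l2_opNorm_fromBlocks_antidiag_le (B : Matrix m₁ n₂ 𝕜) (C : Matrix m₂ n₁ 𝕜) :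
    ‖fromBlocks 0 B C 0‖ ≤ max ‖B‖ ‖C‖ := by
  refine l2_opNorm_le_of_mulVec _ (le_max_of_le_left (norm_nonneg _)) fun x => ?_
  rw [EuclideanSpace.norm_eq_sqrt_inl_inr x, add_comm, fromBlocks_mulVec, zero_mulVec,
    zero_mulVec, add_zero, zero_add]
  exact EuclideanSpace.norm_toLp_sumElim_le (le_max_of_le_left (norm_nonneg _))
    (B.l2_opNorm_mulVec_le_of_le (le_max_left _ _) _)
    (C.l2_opNorm_mulVec_le_of_le (le_max_right _ _) _)

theorem l2_opNorm_fromBlocks_le (A : Matrix m₁ n₁ 𝕜) (B : Matrix m₁ n₂ 𝕜) (C : Matrix m₂ n₁ 𝕜)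
    (D : Matrix m₂ n₂ 𝕜) :
    ‖fromBlocks A B C D‖ ≤ max ‖A‖ ‖D‖ + max ‖B‖ ‖C‖ := by
  have hsplit : fromBlocks A B C D = fromBlocks A 0 0 D + fromBlocks 0 B C 0 := by
    simp [fromBlocks_add]
  rw [hsplit]
  exact (norm_add_le _ _).trans
    (add_le_add (l2_opNorm_fromBlocks_diag_le A D) (l2_opNorm_fromBlocks_antidiag_le B C))

theorem l2_opNorm_fromBlocks_zero₂₁_le (A : Matrix m₁ n₁ 𝕜) (B : Matrix m₁ n₂ 𝕜)
    (D : Matrix m₂ n₂ 𝕜) :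
    ‖fromBlocks A B 0 D‖ ≤ max ‖A‖ ‖D‖ + ‖B‖ := by
  simpa [max_eq_left (norm_nonneg B)] using l2_opNorm_fromBlocks_le A B 0 D

theorem l2_opNorm_one_sub_smul_le {n : Type*} [Fintype n] [DecidableEq n] {H : Matrix n n ℝ}
    {μ L η : ℝ} (hlow : (H - μ • 1).PosSemidef) (hupp : (L • 1 - H).PosSemidef) (hη : 0 ≤ η)
    (hηL : η * L ≤ 1) (hημ : η * μ ≤ 1) : ‖1 - η • H‖ ≤ 1 - η * μ := by
  refine norm_le_of_nonneg_of_le_algebraMap (by linarith) ?_ ?_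
  · have hsum : 1 - η • H = η • (L • 1 - H) + (1 - η * L) • (1 : Matrix n n ℝ) := by module
    rw [nonneg_iff_posSemidef, hsum]
    exact (hupp.smul hη).add (PosSemidef.one.smul (by linarith))
  · have hdiff : (1 - η * μ) • 1 - (1 - η • H) = η • (H - μ • (1 : Matrix n n ℝ)) := by module
    rw [le_iff, Algebra.algebraMap_eq_smul_one, hdiff]
    exact hlow.smul hη

end Matrix

theorem Xmat_inv (d : ℕ) : (Xmat d)⁻¹ = fromBlocks (1 : Matrix (Fin d) (Fin d) ℝ) 0 (-1) 1 := by
  apply inv_eq_right_inv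
  rw [Xmat, fromBlocks_multiply]
  simp [← fromBlocks_one]

theorem Xmat_inv_mul_Amat_mul_Xmat {d : ℕ} (μ η : ℝ) (H : Matrix (Fin d) (Fin d) ℝ) :
    (Xmat d)⁻¹ * Amat μ η H * Xmat d =
      (1 / (1 + η * μ)) •
        fromBlocks ((1 + η * μ) • (1 - η • H)) ((η * μ) • (1 - η • H)) 0
          ((1 - η * μ) • (1 : Matrix (Fin d) (Fin d) ℝ)) := by
  rw [Xmat_inv, Amat, Xmat, mul_smul_comm, smul_mul_assoc]
  congr 1
  simp only [fromBlocks_multiply, Matrix.mul_one, Matrix.mul_zero, Matrix.one_mul,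
    Matrix.neg_mul, Matrix.zero_mul, add_zero, zero_add]
  congr 1 <;> module

theorem stmt_18_general {d : ℕ} (μ L η : ℝ) (hμ : 0 < μ) (hμL : μ ≤ L) (hη : 0 < η)
    (hηL : η ≤ 1 / L) (H : Matrix (Fin d) (Fin d) ℝ)
    (hlow : (H - μ • (1 : Matrix (Fin d) (Fin d) ℝ)).PosSemidef)
    (hupp : (L • (1 : Matrix (Fin d) (Fin d) ℝ) - H).PosSemidef) :
    opNorm ((Xmat d)⁻¹ * Amat μ η H * Xmat d) ≤ 1 := by
  have hηL' : η * L ≤ 1 := (le_div_iff₀ (hμ.trans_le hμL)).mp hηL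
  have hημ₀ : 0 < η * μ := mul_pos hη hμ
  have hημ₁ : η * μ ≤ 1 := (mul_le_mul_of_nonneg_left hμL hη.le).trans hηL'
  have hB := l2_opNorm_one_sub_smul_le hlow hupp hη.le hηL' hημ₁
  have hA : ‖(1 + η * μ) • (1 - η • H)‖ ≤ (1 + η * μ) * (1 - η * μ) := by
    rw [norm_smul, Real.norm_of_nonneg (by positivity)]
    gcongr
  have hoff : ‖(η * μ) • (1 - η • H)‖ ≤ η * μ * (1 - η * μ) := by
    rw [norm_smul, Real.norm_of_nonneg hημ₀.le]
    gcongr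
  have hI : ‖(1 - η * μ) • (1 : Matrix (Fin d) (Fin d) ℝ)‖ ≤ 1 - η * μ :=
    norm_le_of_nonneg_of_le_algebraMap (by linarith)
      (nonneg_iff_posSemidef.mpr (PosSemidef.one.smul (by linarith)))
      (Algebra.algebraMap_eq_smul_one _).symm.le
  rw [opNorm, l2_opNorm_toEuclideanCLM]
  rw [Xmat_inv_mul_Amat_mul_Xmat, norm_smul, Real.norm_of_nonneg (by positivity),
    one_div, inv_mul_le_iff₀ (by positivity)]
  calc _ ≤ max ((1 + η * μ) * (1 - η * μ)) (1 - η * μ) + η * μ * (1 - η * μ) :=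
        (l2_opNorm_fromBlocks_zero₂₁_le _ _ _).trans
          (add_le_add (max_le_max hA hI) hoff)
    _ = (1 + η * μ) * (1 - η * μ) + η * μ * (1 - η * μ) := by
        rw [max_eq_left (le_mul_of_one_le_left (by linarith) (by linarith))]
    _ ≤ (1 + η * μ) * 1 := by nlinarith

/-- For `0 < μ ≤ L`, `0 < η ≤ 1/L`, and any symmetric `H` with `μI ⪯ H ⪯ LI`,
the conjugated recursion matrix satisfies `‖X⁻¹ A X‖₂ ≤ 1` (case `γ = η`). -/
theorem stmt_18 {d : ℕ} (μ L η : ℝ) (hμ : 0 < μ) (hμL : μ ≤ L) (hη : 0 < η)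
    (hηL : η ≤ 1 / L) (H : Matrix (Fin d) (Fin d) ℝ) (hsymm : H.IsSymm)
    (hlow : (H - μ • (1 : Matrix (Fin d) (Fin d) ℝ)).PosSemidef)
    (hupp : (L • (1 : Matrix (Fin d) (Fin d) ℝ) - H).PosSemidef) :
    opNorm ((Xmat d)⁻¹ * Amat μ η H * Xmat d) ≤ 1 :=
  stmt_18_general μ L η hμ hμL hη hηL H hlow hupp
end
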